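/- There exist permutations σ₁, σ₂, σ₃ of {1, …, 30} such that σ₁ ∘ σ₂ ∘ σ₃ = id, the subgroup generated by σ₁, σ₂, σ₃ acts transitively on {1, …, 30}, and the multisets of orbit sizes of the cyclic groups generated by σ₁, σ₂, σ₃ are, respectively, {11,6,6,1,1,1,1,1,1,1}, {11,5,4,4,2,2,2}, and {7,6,4,4,4,3,2}. -/

import Mathlib

/-!
Each permutation is written as a product of disjoint cycles, and everything is then a finite
check. The orbits of `⟨σ⟩` are the classes of `σ.SameCycle`, which Mathlib decides by iterating
`σ`, so the orbit sizes can be evaluated; transitivity holds because the two 11-cycles of `σ₁` and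
`σ₂` through `0` already carry `0` to every point by some `σ₂ ^ b * σ₁ ^ a`.
-/

/-- The number of orbits of the cyclic group generated by a permutation `σ`
(i.e., the number of cycles of `σ`, counting fixed points as cycles of length 1). -/
noncomputable def cycleCount {α : Type*} [Finite α] (σ : Equiv.Perm α) : ℕ :=
  Nat.card (MulAction.orbitRel.Quotient (Subgroup.zpowers σ) α)

/-- The multiset of sizes of the orbits of the cyclic group generated by a permutation `σ`
(i.e., the cycle type of `σ`, with fixed points contributing parts equal to 1). -/
noncomputable def orbitSizes {α : Type*} [Finite α] (σ : Equiv.Perm α) : Multiset ℕ :=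
  letI := Fintype.ofFinite (MulAction.orbitRel.Quotient (Subgroup.zpowers σ) α)
  (Finset.univ : Finset (MulAction.orbitRel.Quotient (Subgroup.zpowers σ) α)).val.map
    fun q => Nat.card q.orbit

open Equiv Equiv.Perm MulAction Finset Subgroup

theorem MulAction.univ_map_card_orbit_eq {G α : Type*} [Group G] [MulAction G α] [Fintype α]
    [DecidableEq α] [Fintype (orbitRel.Quotient G α)] (orb : α → Finset α)
    (h : ∀ x, (orb x : Set α) = orbit G x) :
    (univ : Finset (orbitRel.Quotient G α)).val.map (fun q => Nat.card q.orbit) =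
      (univ.image orb).val.map Finset.card := by
  set f : orbitRel.Quotient G α → Finset α := fun q => orb q.out
  have hf (q : orbitRel.Quotient G α) : (f q : Set α) = q.orbit := by
    rw [h, orbitRel.Quotient.orbit_eq_orbit_out _ Quotient.out_eq']
  have hf_inj : Function.Injective f := fun q q' e =>
    orbitRel.Quotient.orbit_injective (by rw [← hf, ← hf, e])
  have hf_image : univ.image f = univ.image orb := by
    ext s
    simp only [mem_image, mem_univ, true_and]
    refine ⟨fun ⟨q, hq⟩ => ⟨q.out, hq⟩, fun ⟨x, hx⟩ => ⟨Quotient.mk'' x, ?_⟩⟩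
    rw [← hx]
    exact Finset.coe_injective (by rw [hf, h, orbitRel.Quotient.orbit_mk])
  calc _ = univ.val.map (Finset.card ∘ f) :=
        Multiset.map_congr rfl fun q _ => by
          rw [Function.comp_apply, ← hf, coe_sort_coe, Nat.card_eq_finsetCard]
    _ = (univ.image orb).val.map Finset.card := by
        rw [← Multiset.map_map, ← image_val_of_injOn hf_inj.injOn, hf_image]

namespace Equiv.Perm

variable {α : Type*}

theorem mem_orbit_zpowers_iff_sameCycle {σ : Perm α} {x y : α} :
    y ∈ orbit (zpowers σ) x ↔ σ.SameCycle x y := by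
  simp [mem_orbit_iff, exists_zpowers, SameCycle, Subgroup.smul_def]

theorem orbitSizes_eq_image_sameCycle [Fintype α] [DecidableEq α] (σ : Perm α) :
    orbitSizes σ = (univ.image fun x => univ.filter (σ.SameCycle x)).val.map Finset.card := by
  let := Fintype.ofFinite (orbitRel.Quotient (zpowers σ) α)
  exact univ_map_card_orbit_eq _ fun x => by
    ext y
    simp [mem_orbit_zpowers_iff_sameCycle]

theorem exists_mem_apply_eq_of_forall_exists_mem_apply_eq {H : Subgroup (Perm α)} (a : α)
    (h : ∀ x, ∃ g ∈ H, g a = x) (x y : α) : ∃ g ∈ H, g x = y := by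
  obtain ⟨g, hg, rfl⟩ := h x
  obtain ⟨k, hk, rfl⟩ := h y
  exact ⟨k * g⁻¹, mul_mem hk (inv_mem hg), by simp⟩

end Equiv.Perm

def σ₁ : Perm (Fin 30) :=
  c[0, 6, 19, 13, 3, 23, 29, 9, 14, 17, 22] * c[1, 2, 12, 24, 11, 7] * c[4, 27, 21, 10, 20, 25]

def σ₂ : Perm (Fin 30) :=
  c[0, 11, 15, 25, 9, 2, 7, 17, 24, 18, 16] * c[1, 6] * c[3, 10, 4, 21] * c[5, 29] *
    c[8, 20, 13, 27, 14] * c[12, 23, 26, 19] * c[22, 28]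

def σ₃ : Perm (Fin 30) :=
  c[0, 28, 22, 7] * c[1, 2, 6, 16, 18, 24, 19] * c[3, 20] * c[4, 15, 11, 17, 27, 10] *
    c[5, 29, 12, 9] * c[8, 14, 25] * c[13, 26, 23, 21]

theorem σ₁_mul_σ₂_mul_σ₃ : σ₁ * σ₂ * σ₃ = 1 := by decide +kernel

theorem forall_exists_pow_mul_pow_apply_zero_eq :
    ∀ x : Fin 30, ∃ a b : Fin 11, (σ₂ ^ (b : ℕ) * σ₁ ^ (a : ℕ)) 0 = x := by
  decide +kernel

theorem orbitSizes_σ₁ : orbitSizes σ₁ = ({11, 6, 6, 1, 1, 1, 1, 1, 1, 1} : Multiset ℕ) := by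
  rw [orbitSizes_eq_image_sameCycle]
  decide +kernel

theorem orbitSizes_σ₂ : orbitSizes σ₂ = ({11, 5, 4, 4, 2, 2, 2} : Multiset ℕ) := by
  rw [orbitSizes_eq_image_sameCycle]
  decide +kernel

theorem orbitSizes_σ₃ : orbitSizes σ₃ = ({7, 6, 4, 4, 4, 3, 2} : Multiset ℕ) := by
  rw [orbitSizes_eq_image_sameCycle]
  decide +kernel

/-- Realizability of the degree-30 branch-data triple
`[11, 6, 6, 1, 1, 1, 1, 1, 1, 1]`, `[11, 5, 4, 4, 2, 2, 2]`, `[7, 6, 4, 4, 4, 3, 2]`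
by a transitive permutation triple with product the identity. -/
theorem realizable_triple_14 :
    ∃ σ₁ σ₂ σ₃ : Equiv.Perm (Fin 30),
      σ₁ * σ₂ * σ₃ = 1 ∧
      (∀ x y : Fin 30,
        ∃ g ∈ Subgroup.closure ({σ₁, σ₂, σ₃} : Set (Equiv.Perm (Fin 30))), g x = y) ∧
      orbitSizes σ₁ = ({11, 6, 6, 1, 1, 1, 1, 1, 1, 1} : Multiset ℕ) ∧
      orbitSizes σ₂ = ({11, 5, 4, 4, 2, 2, 2} : Multiset ℕ) ∧
      orbitSizes σ₃ = ({7, 6, 4, 4, 4, 3, 2} : Multiset ℕ) := by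
  refine ⟨σ₁, σ₂, σ₃, σ₁_mul_σ₂_mul_σ₃, ?_, orbitSizes_σ₁, orbitSizes_σ₂, orbitSizes_σ₃⟩
  refine exists_mem_apply_eq_of_forall_exists_mem_apply_eq 0 fun x => ?_
  obtain ⟨a, b, hab⟩ := forall_exists_pow_mul_pow_apply_zero_eq x
  have hσ₁ : σ₁ ∈ closure ({σ₁, σ₂, σ₃} : Set (Perm (Fin 30))) := subset_closure (by simp)
  have hσ₂ : σ₂ ∈ closure ({σ₁, σ₂, σ₃} : Set (Perm (Fin 30))) := subset_closure (by simp)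
  exact ⟨_, mul_mem (pow_mem hσ₂ _) (pow_mem hσ₁ _), hab⟩
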